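/- For every α ∈ ℂ^N and every 1 ≤ t ≤ T, the propagation Hamiltonian annihilates the history vector: H_prop(t).mulVec η_α = 0. Consequently H_prop.mulVec η_α = 0. -/

import Mathlib

open Matrix Kronecker BigOperators

variable {N T : ℕ}

/-- `prodU U t = U_t ⋯ U_1` (with `U_k := U ⟨k-1⟩`); for `t = 0` it is the identity. -/
noncomputable def prodU (U : Fin T → Matrix (Fin N) (Fin N) ℂ) : ℕ → Matrix (Fin N) (Fin N) ℂ
  | 0 => 1
  | s + 1 => (if h : s < T then U ⟨s, h⟩ else 1) * prodU U s

/-- The matrix `E_{s,t}` with a single `1` in entry `(s,t)`. -/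
noncomputable def Eij (s t : Fin (T + 1)) : Matrix (Fin (T + 1)) (Fin (T + 1)) ℂ :=
  Matrix.single s t 1

/-- The `t`-th standard basis vector `e_t` of `ℂ^{T+1}`. -/
noncomputable def eVec (t : Fin (T + 1)) : Fin (T + 1) → ℂ := fun s => if s = t then 1 else 0

/-- Kronecker product of a vector in `ℂ^N` with a vector in `ℂ^{T+1}`. -/
noncomputable def vecKron (x : Fin N → ℂ) (y : Fin (T + 1) → ℂ) : Fin N × Fin (T + 1) → ℂ :=
  fun p => x p.1 * y p.2

/-- The history vector `η_α = ∑_{t=0}^T (U_t ⋯ U_1 α) ⊗ e_t`. -/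
noncomputable def historyVec (U : Fin T → Matrix (Fin N) (Fin N) ℂ) (α : Fin N → ℂ) :
    Fin N × Fin (T + 1) → ℂ :=
  ∑ t : Fin (T + 1), vecKron ((prodU U (t : ℕ)).mulVec α) (eVec t)

/-- The propagation Hamiltonian term `H_prop(t)` verifying the step from time `t-1`
to time `t` (here `t ∈ {1, …, T}` is encoded by `t : Fin T`, via `t.castSucc ↦ t.succ`). -/
noncomputable def HpropT (U : Fin T → Matrix (Fin N) (Fin N) ℂ) (t : Fin T) :
    Matrix (Fin N × Fin (T + 1)) (Fin N × Fin (T + 1)) ℂ :=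
  (1 / 2 : ℂ) •
    ((1 : Matrix (Fin N) (Fin N) ℂ) ⊗ₖ (Eij t.succ t.succ + Eij t.castSucc t.castSucc)
      - (U t) ⊗ₖ Eij t.succ t.castSucc - (U t)ᴴ ⊗ₖ Eij t.castSucc t.succ)

/-- The full propagation Hamiltonian `H_prop = ∑_{t=1}^T H_prop(t)`. -/
noncomputable def Hprop (U : Fin T → Matrix (Fin N) (Fin N) ℂ) :
    Matrix (Fin N × Fin (T + 1)) (Fin N × Fin (T + 1)) ℂ :=
  ∑ t : Fin T, HpropT U t


@[simp] lemma vecKron_zero (x : Fin N → ℂ) : vecKron x (0 : Fin (T+1) → ℂ) = 0 := by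
  funext p; simp [vecKron]

lemma sum_mulVec' {ι : Type*} (s : Finset ι) (A : ι → Matrix (Fin N × Fin (T+1)) (Fin N × Fin (T+1)) ℂ)
    (x : Fin N × Fin (T+1) → ℂ) : (∑ i ∈ s, A i).mulVec x = ∑ i ∈ s, (A i).mulVec x := by
  funext p
  simp only [Matrix.mulVec, dotProduct, Finset.sum_apply, Matrix.sum_apply, Finset.sum_mul]
  exact Finset.sum_comm

lemma kron_mulVec_vecKron (A : Matrix (Fin N) (Fin N) ℂ)
    (B : Matrix (Fin (T+1)) (Fin (T+1)) ℂ) (x : Fin N → ℂ) (y : Fin (T+1) → ℂ) :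
    (A ⊗ₖ B).mulVec (vecKron x y) = vecKron (A.mulVec x) (B.mulVec y) := by
  funext p
  simp only [Matrix.mulVec, dotProduct, vecKron, kroneckerMap_apply,
    Fintype.sum_prod_type, Finset.mul_sum, Finset.sum_mul]
  rw [Finset.sum_comm]
  apply Finset.sum_congr rfl; intros; apply Finset.sum_congr rfl; intros; ring

lemma Eij_mulVec_eVec (s t r : Fin (T+1)) :
    (Eij s t).mulVec (eVec r) = if r = t then eVec s else 0 := by
  funext q
  simp [Eij, eVec, Matrix.mulVec, dotProduct, Matrix.single]
  by_cases h : r = t <;> by_cases h2 : q = s <;> simp_all [eVec, eq_comm]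

/-- For every `α ∈ ℂ^N` and every `1 ≤ t ≤ T`, the propagation Hamiltonian `H_prop(t)`
annihilates the history vector `η_α`; consequently, so does the full `H_prop`. -/
theorem stmt_6 {N T : ℕ} (hN : 1 ≤ N) (hT : 1 ≤ T)
    (U : Fin T → Matrix (Fin N) (Fin N) ℂ)
    (hU : ∀ t, (U t)ᴴ * U t = 1 ∧ U t * (U t)ᴴ = 1)
    (α : Fin N → ℂ) :
    (∀ t : Fin T, (HpropT U t).mulVec (historyVec U α) = 0) ∧
      (Hprop U).mulVec (historyVec U α) = 0 := by
  set v : Fin (T+1) → (Fin N → ℂ) := fun r => (prodU U (r : ℕ)).mulVec α with hv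
  have hterm : ∀ t : Fin T, (HpropT U t).mulVec (historyVec U α) = 0 := by
    intro t
    have hsucc : v t.succ = (U t).mulVec (v t.castSucc) := by
      simp only [hv, Fin.val_succ, Fin.coe_castSucc, prodU, t.isLt, dif_pos]
      rw [← Matrix.mulVec_mulVec]
    have hconj : (U t)ᴴ.mulVec (v t.succ) = v t.castSucc := by
      rw [hsucc, Matrix.mulVec_mulVec, (hU t).1, Matrix.one_mulVec]
    have hne : t.castSucc ≠ t.succ := (Fin.castSucc_lt_succ : t.castSucc < t.succ).ne
    have hexp : ∀ r : Fin (T+1),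
        (HpropT U t).mulVec (vecKron (v r) (eVec r)) =
          (if r = t.succ then
            (1/2 : ℂ) • (vecKron (v r) (eVec t.succ) - vecKron ((U t)ᴴ.mulVec (v r)) (eVec t.castSucc))
           else 0) +
          (if r = t.castSucc then
            (1/2 : ℂ) • (vecKron (v r) (eVec t.castSucc) - vecKron ((U t).mulVec (v r)) (eVec t.succ))
           else 0) := by
      intro r
      simp only [HpropT, Matrix.smul_mulVec, Matrix.sub_mulVec, Matrix.kroneckerMap_add_right,
        Matrix.add_mulVec, kron_mulVec_vecKron, Eij_mulVec_eVec, Matrix.one_mulVec]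
      by_cases h1 : r = t.succ <;> by_cases h2 : r = t.castSucc <;>
        simp_all [smul_sub]
    have : (HpropT U t).mulVec (historyVec U α) =
        ∑ r : Fin (T+1), (HpropT U t).mulVec (vecKron (v r) (eVec r)) := by
      rw [historyVec]
      exact map_sum (HpropT U t).mulVecLin _ _
    rw [this]
    simp only [hexp, Finset.sum_add_distrib, Finset.sum_ite_eq', Finset.mem_univ, if_true]
    rw [hconj, ← hsucc]
    module
  refine ⟨hterm, ?_⟩
  have : (Hprop U).mulVec (historyVec U α) = ∑ t : Fin T, (HpropT U t).mulVec (historyVec U α) := by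
    rw [Hprop]
    exact sum_mulVec' _ _ _
  simp [this, hterm]
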